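/- arXiv:1904.10611 — 7 statements merged into one kernel-verified Lean document; each statement's English description precedes it below -/
import Mathlib

section
/- Families of stringwise approximants t_k : A^{k+1} → B^{k+1} satisfying the compatibility condition t_k(w) = (t_{k+1}(w·a))_{0:k} for all w ∈ A^{k+1} and a ∈ A are in bijection with causal functions A^ω → B^ω, via T_k(f)(w) = f(w:σ)_{0:k}. -/
/-- A stream function is *causal* if initial segments of length `k+1` of the
input determine initial segments of length `k+1` of the output. -/
def Causal {A B : Type*} (f : (ℕ → A) → (ℕ → B)) : Prop :=
  ∀ σ τ : ℕ → A, ∀ k : ℕ, (∀ i ≤ k, σ i = τ i) → ∀ i ≤ k, f σ i = f τ i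

/-- Extend a finite word to a stream (padding with the first letter). -/
def extW {A : Type*} {k : ℕ} (w : Fin (k+1) → A) : ℕ → A :=
  fun n => if h : n < k+1 then w ⟨n, h⟩ else w 0

/-- The `k`-th pointwise approximant (unrolling) of a causal function. -/
def U {A B : Type*} (f : (ℕ → A) → (ℕ → B)) (k : ℕ) (w : Fin (k+1) → A) : B :=
  f (extW w) k

/-- The `k`-th stringwise approximant (truncation) of a causal function. -/
def T {A B : Type*} (f : (ℕ → A) → (ℕ → B)) (k : ℕ) (w : Fin (k+1) → A) :
    Fin (k+1) → B := fun i => f (extW w) i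

/-- The initial segment `σ_{0:k}` of a stream, as a finite word. -/
def init {A : Type*} (σ : ℕ → A) (k : ℕ) : Fin (k+1) → A := fun i => σ i

/-- A family of stringwise approximants is *compatible* if `t_k w` is the
initial segment of `t_{k+1} (w·a)` for every letter `a`. -/
def Compatible {A B : Type*}
    (t : (k : ℕ) → (Fin (k+1) → A) → Fin (k+1) → B) : Prop :=
  ∀ (k : ℕ) (w : Fin (k+1) → A) (a : A) (i : Fin (k+1)),
    t k w i = t (k+1) (Fin.snoc w a) i.castSucc

lemma compat_trunc {A B : Type*} {t : (k : ℕ) → (Fin (k+1) → A) → Fin (k+1) → B}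
    (ht : Compatible t) :
    ∀ (k : ℕ) (w : Fin (k+1) → A) (i : Fin (k+1)),
      t k w i = t i.val (fun j => w ⟨j.val, lt_of_lt_of_le j.isLt (Nat.succ_le_of_lt i.isLt)⟩)
        (Fin.last i.val) := by
  intro k
  induction k with
  | zero =>
    intro w i
    have hi : i = 0 := Fin.fin_one_eq_zero i
    subst hi
    show t 0 w 0 = t 0 (fun j => w ⟨j.val, _⟩) (Fin.last 0)
    have hw : (fun j : Fin 1 => w ⟨j.val, lt_of_lt_of_le j.isLt (Nat.succ_le_of_lt (0 : Fin 1).isLt)⟩) = w :=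
      funext fun j => congrArg w (Fin.ext rfl)
    rw [hw]
    rfl
  | succ k ih =>
    intro w i
    refine Fin.lastCases ?_ ?_ i
    · show t (k+1) w (Fin.last (k+1)) = t (k+1) (fun j => w ⟨j.val, _⟩) (Fin.last (k+1))
      have hw : (fun j : Fin (k+2) => w ⟨j.val, lt_of_lt_of_le j.isLt (Nat.succ_le_of_lt (Fin.last (k+1)).isLt)⟩) = w :=
        funext fun j => congrArg w (Fin.ext rfl)
      rw [hw]
    · intro j
      have hsnoc : w = Fin.snoc (Fin.init w) (w (Fin.last (k+1))) := by
        simp [Fin.snoc_init_self]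
      have h1 : t (k+1) w j.castSucc = t k (Fin.init w) j := by
        conv_lhs => rw [hsnoc]
        exact (ht k (Fin.init w) (w (Fin.last (k+1))) j).symm
      rw [h1, ih (Fin.init w) j]
      show t j.val (fun m => Fin.init w ⟨m.val, _⟩) (Fin.last j.val)
         = t j.val (fun m => w ⟨m.val, _⟩) (Fin.last j.val)
      congr 1

/-- Compatible families of stringwise approximants are in bijection with
causal functions, via `T`. -/
theorem stringwise_approximants_bijection {A B : Type*} :
    (∀ f : (ℕ → A) → ℕ → B, Causal f → Compatible (fun k => T f k)) ∧
    (∀ t : (k : ℕ) → (Fin (k+1) → A) → Fin (k+1) → B, Compatible t →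
      ∃! f : (ℕ → A) → ℕ → B, Causal f ∧ ∀ k, T f k = t k) := by
  constructor
  · intro f hf k w a i
    simp only [T]
    apply hf _ _ k
    · intro n hn
      have hn1 : n < k + 1 := Nat.lt_succ_of_le hn
      have hn2 : n < k + 2 := by omega
      simp only [extW, dif_pos hn1, dif_pos hn2]
      rw [show (⟨n, hn2⟩ : Fin (k+2)) = Fin.castSucc ⟨n, hn1⟩ from rfl,
        Fin.snoc_castSucc]
    · exact Nat.lt_succ_iff.mp i.isLt
  · intro t ht
    refine ⟨fun σ n => t n (init σ n) (Fin.last n), ⟨?_, ?_⟩, ?_⟩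
    · intro σ τ k hagree i hik
      have : init σ i = init τ i := by
        funext j
        exact hagree j (le_trans (Nat.lt_succ_iff.mp j.isLt) hik)
      show t i (init σ i) (Fin.last i) = t i (init τ i) (Fin.last i)
      rw [this]
    · intro k
      funext w i
      simp only [T]
      rw [compat_trunc ht k w i]
      congr 1
      funext j
      simp only [init, extW]
      have hj : (j : ℕ) < k + 1 := lt_of_lt_of_le j.isLt (Nat.succ_le_of_lt i.isLt)
      rw [dif_pos hj]
    · intro f ⟨hcf, hTf⟩
      funext σ n
      have h1 : f σ n = f (extW (init σ n)) n := by
        apply hcf _ _ n _ n le_rfl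
        intro i hi
        simp only [extW, init, dif_pos (Nat.lt_succ_of_le hi)]
      have h2 : f (extW (init σ n)) n = T f n (init σ n) (Fin.last n) := rfl
      rw [h1, h2, hTf n]
end

section
/- A causal function f : (ℝ^n)^ω → (ℝ^m)^ω is differentiable at σ (meaning all pointwise approximants U_k(f) are differentiable at σ_{0:k}) if and only if all stringwise approximants T_k(f) are differentiable at σ_{0:k}; moreover in this case the causal derivative D f(σ) satisfies T_k(D f(σ)) = J(T_k(f))(σ_{0:k}). -/
/-- A causal function is differentiable at a stream `σ` when all of its
pointwise approximants are differentiable at `σ_{0:k}`. -/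
def CausalDiffAt {E F : Type*} [NormedAddCommGroup E] [NormedSpace ℝ E]
    [NormedAddCommGroup F] [NormedSpace ℝ F]
    (f : (ℕ → E) → ℕ → F) (σ : ℕ → E) : Prop :=
  ∀ k, DifferentiableAt ℝ (U f k) (init σ k)

/-- `L` is the causal derivative of `f` at `σ`: the `k`-th pointwise
approximant of `L` is the Jacobian of `U_k(f)` at `σ_{0:k}`. -/
def IsCausalDerivAt {E F : Type*} [NormedAddCommGroup E] [NormedSpace ℝ E]
    [NormedAddCommGroup F] [NormedSpace ℝ F]
    (f : (ℕ → E) → ℕ → F) (σ : ℕ → E) (L : (ℕ → E) → ℕ → F) : Prop :=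
  ∀ (Δ : ℕ → E) (k : ℕ), L Δ k = fderiv ℝ (U f k) (init σ k) (init Δ k)

section Aux

variable {E F : Type*} [NormedAddCommGroup E] [NormedSpace ℝ E]
  [NormedAddCommGroup F] [NormedSpace ℝ F]

/-- Restriction of a word of length `k+1` to its first `i+1` letters, as a CLM. -/
def restrCLM (E : Type*) [NormedAddCommGroup E] [NormedSpace ℝ E] {k i : ℕ}
    (h : i ≤ k) : (Fin (k+1) → E) →L[ℝ] (Fin (i+1) → E) :=
  ContinuousLinearMap.pi fun j =>
    ContinuousLinearMap.proj (Fin.castLE (by omega) j)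

lemma restrCLM_init (σ : ℕ → E) {k i : ℕ} (h : i ≤ k) :
    restrCLM E h (init σ k) = init σ i := rfl

lemma T_eq (f : (ℕ → E) → ℕ → F) (hf : Causal f) {k : ℕ} (i : Fin (k+1))
    (w : Fin (k+1) → E) :
    T f k w i = U f i (restrCLM E (Nat.lt_succ_iff.mp i.isLt) w) := by
  refine hf _ _ i (fun j hj => ?_) i le_rfl
  have hj1 : j < (i : ℕ) + 1 := Nat.lt_succ_of_le hj
  have hjk : j < k + 1 := by omega
  simp only [extW, hj1, hjk, dif_pos]
  rfl

lemma U_eq_T_last (f : (ℕ → E) → ℕ → F) (k : ℕ) (w : Fin (k+1) → E) :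
    U f k w = T f k w (Fin.last k) := rfl

end Aux

/-- `f` is causally differentiable at `σ` iff all stringwise approximants are
differentiable at `σ_{0:k}`; in that case the causal derivative's stringwise
approximants are the Jacobians of the stringwise approximants of `f`. -/
theorem stringwise_differentiability {n m : ℕ}
    (f : (ℕ → (Fin n → ℝ)) → ℕ → (Fin m → ℝ)) (hf : Causal f)
    (σ : ℕ → Fin n → ℝ) :
    (CausalDiffAt f σ ↔ ∀ k, DifferentiableAt ℝ (T f k) (init σ k)) ∧
    (CausalDiffAt f σ → ∀ L, IsCausalDerivAt f σ L →
      ∀ (k : ℕ) (Δ : ℕ → Fin n → ℝ),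
        T L k (init Δ k) = fderiv ℝ (T f k) (init σ k) (init Δ k)) := by
  have key : ∀ (hσ : CausalDiffAt f σ) (k : ℕ),
      HasFDerivAt (T f k)
        (ContinuousLinearMap.pi fun i : Fin (k+1) =>
          (fderiv ℝ (U f (i : ℕ)) (init σ i)).comp
            (restrCLM (Fin n → ℝ) (Nat.lt_succ_iff.mp i.isLt)))
        (init σ k) := by
    intro hσ k
    refine hasFDerivAt_pi'.2 fun i => ?_
    have h1 : HasFDerivAt (fun w => U f (i : ℕ)
        (restrCLM (Fin n → ℝ) (Nat.lt_succ_iff.mp i.isLt) w))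
        ((fderiv ℝ (U f (i : ℕ)) (init σ i)).comp
          (restrCLM (Fin n → ℝ) (Nat.lt_succ_iff.mp i.isLt))) (init σ k) := by
      have := (hσ i).hasFDerivAt
      rw [← restrCLM_init σ (Nat.lt_succ_iff.mp i.isLt)] at this
      exact this.comp _ ((restrCLM (Fin n → ℝ)
        (Nat.lt_succ_iff.mp i.isLt)).hasFDerivAt)
    have h2 : (fun w => T f k w i) = fun w => U f (i : ℕ)
        (restrCLM (Fin n → ℝ) (Nat.lt_succ_iff.mp i.isLt) w) :=
      funext fun w => T_eq f hf i w
    rw [show ((ContinuousLinearMap.proj i).comp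
        (ContinuousLinearMap.pi fun i : Fin (k+1) =>
          (fderiv ℝ (U f (i : ℕ)) (init σ i)).comp
            (restrCLM (Fin n → ℝ) (Nat.lt_succ_iff.mp i.isLt)))) =
        (fderiv ℝ (U f (i : ℕ)) (init σ i)).comp
          (restrCLM (Fin n → ℝ) (Nat.lt_succ_iff.mp i.isLt)) from rfl, h2]
    exact h1
  constructor
  · constructor
    · intro hσ k
      exact (key hσ k).differentiableAt
    · intro h k
      have := h k
      exact differentiableAt_pi.1 this (Fin.last k)
  · intro hσ L hL k Δ
    funext i
    have hfd := (key hσ k).fderiv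
    rw [hfd]
    have h1 : T L k (init Δ k) i = L (extW (init Δ k)) i := rfl
    rw [h1, hL]
    have h2 : init (extW (init Δ k)) (i : ℕ) = init Δ (i : ℕ) := by
      funext j
      have : (j : ℕ) < k + 1 := by have := j.isLt; have := i.isLt; omega
      simp [init, extW, this]
    rw [h2]
    rfl
end

section
/- The Cauchy product × : (ℝ²)^ω → ℝ^ω, defined by (σ × τ)_k = Σ_{i=0}^k σ_i·τ_{k-i}, is causally differentiable at every (σ,τ), and its causal derivative is D×(σ,τ)(Δσ,Δτ) = Δσ × τ + σ × Δτ. -/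
/-- The Cauchy product of two real streams. -/
def cauchy (σ τ : ℕ → ℝ) : ℕ → ℝ :=
  fun k => ∑ i ∈ Finset.range (k+1), σ i * τ (k - i)

/-- The constant stream `[r] = (r, 0, 0, ...)`. -/
def streamConst (r : ℝ) : ℕ → ℝ := fun k => if k = 0 then r else 0

/-- The Cauchy product as a causal function `(ℝ²)^ω → ℝ^ω`. -/
def cprod (p : ℕ → ℝ × ℝ) : ℕ → ℝ :=
  fun k => ∑ i ∈ Finset.range (k+1), (p i).1 * (p (k - i)).2

lemma extW_of_lt {A : Type*} {k : ℕ} (w : Fin (k+1) → A) {n : ℕ} (h : n < k+1) :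
    extW w n = w ⟨n, h⟩ :=
  dif_pos h

lemma sum_range_succ_eq_sum_fin_rev {M : Type*} [AddCommMonoid M] (k : ℕ) (f : ℕ → ℕ → M) :
    ∑ i ∈ Finset.range (k+1), f i (k - i) = ∑ i : Fin (k+1), f i i.rev := by
  rw [Finset.sum_range]
  simp only [Fin.val_rev, Nat.add_sub_add_right]

lemma U_cprod (k : ℕ) :
    U cprod k = fun w => ∑ i : Fin (k+1), (w i).1 * (w i.rev).2 := by
  funext w
  simp only [U, cprod, sum_range_succ_eq_sum_fin_rev k (fun i j => (extW w i).1 * (extW w j).2),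
    extW_of_lt w (Fin.is_lt _), Fin.eta]

lemma hasFDerivAt_U_cprod (k : ℕ) (w : Fin (k+1) → ℝ × ℝ) :
    HasFDerivAt (U cprod k)
      (∑ i : Fin (k+1), ((w i).1 • ((ContinuousLinearMap.snd ℝ ℝ ℝ).comp (.proj i.rev)) +
        (w i.rev).2 • ((ContinuousLinearMap.fst ℝ ℝ ℝ).comp (.proj i)))) w := by
  rw [U_cprod]
  exact HasFDerivAt.fun_sum fun i _ =>
    (hasFDerivAt_apply i w).fst.mul (hasFDerivAt_apply i.rev w).snd

lemma fderiv_U_cprod_apply (k : ℕ) (w h : Fin (k+1) → ℝ × ℝ) :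
    fderiv ℝ (U cprod k) w h = ∑ i : Fin (k+1), ((h i).1 * (w i.rev).2 + (w i).1 * (h i.rev).2) := by
  rw [(hasFDerivAt_U_cprod k w).fderiv]
  simp [add_comm, mul_comm]

/-- Derivative of the Cauchy product:
`D×(σ,τ)(Δσ,Δτ) = Δσ × τ + σ × Δτ`. -/
theorem cauchy_product_deriv (p : ℕ → ℝ × ℝ) :
    CausalDiffAt cprod p ∧
    IsCausalDerivAt cprod p (fun Δ =>
      cauchy (fun i => (Δ i).1) (fun i => (p i).2) +
      cauchy (fun i => (p i).1) (fun i => (Δ i).2)) := by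
  refine ⟨fun k => (hasFDerivAt_U_cprod k (init p k)).differentiableAt, fun Δ k => ?_⟩
  dsimp only
  rw [fderiv_U_cprod_apply, Pi.add_apply, cauchy, cauchy,
    sum_range_succ_eq_sum_fin_rev k (fun i j => (Δ i).1 * (p j).2),
    sum_range_succ_eq_sum_fin_rev k (fun i j => (p i).1 * (Δ j).2), ← Finset.sum_add_distrib]
  rfl
end

section
/- Causal parallel rule: if f : (ℝ^n)^ω → (ℝ^m)^ω is causally differentiable at σ and h : (ℝ^p)^ω → (ℝ^q)^ω is causally differentiable at τ, then the parallel composite f ∥ h : (ℝ^{n+p})^ω → (ℝ^{m+q})^ω, acting as f on the first components and h on the second, is causally differentiable at (σ,τ) with derivative D f(σ) ∥ D h(τ). -/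
/-- The parallel composite of two stream functions. -/
def par {E E' F F' : Type*} (f : (ℕ → E) → ℕ → F) (h : (ℕ → E') → ℕ → F')
    (ρ : ℕ → E × E') : ℕ → F × F' :=
  fun k => (f (fun i => (ρ i).1) k, h (fun i => (ρ i).2) k)

/-! Each approximant `U_k (f ∥ h)` is `Prod.map (U_k f) (U_k h)` precomposed with the linear map
splitting a word over `E × E'` into its two component words, so the chain rule and the
derivative of `Prod.map` give both differentiability and the derivative `D f(σ) ∥ D h(τ)`. -/

section ParallelApproximants

variable {E E' F F' : Type*} [NormedAddCommGroup E] [NormedSpace ℝ E]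
  [NormedAddCommGroup E'] [NormedSpace ℝ E'] [NormedAddCommGroup F] [NormedSpace ℝ F]
  [NormedAddCommGroup F'] [NormedSpace ℝ F']

noncomputable def unzipWord (k : ℕ) :
    (Fin (k+1) → E × E') →L[ℝ] (Fin (k+1) → E) × (Fin (k+1) → E') :=
  (ContinuousLinearMap.pi fun i => (ContinuousLinearMap.fst ℝ E E').comp (.proj i)).prod
    (ContinuousLinearMap.pi fun i => (ContinuousLinearMap.snd ℝ E E').comp (.proj i))

omit [NormedAddCommGroup F] [NormedSpace ℝ F] [NormedAddCommGroup F'] [NormedSpace ℝ F'] in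
lemma U_par (f : (ℕ → E) → ℕ → F) (h : (ℕ → E') → ℕ → F') (k : ℕ) :
    U (par f h) k = Prod.map (U f k) (U h k) ∘ unzipWord k := by
  funext w
  simp only [U, par, extW, Function.comp_apply, Prod.map, unzipWord, apply_dite Prod.fst,
    apply_dite Prod.snd]
  rfl

lemma unzipWord_init (ρ : ℕ → E × E') (k : ℕ) :
    unzipWord k (init ρ k) = (init (fun i => (ρ i).1) k, init (fun i => (ρ i).2) k) :=
  rfl

lemma hasFDerivAt_U_par {f : (ℕ → E) → ℕ → F} {h : (ℕ → E') → ℕ → F'} {σ : ℕ → E}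
    {τ : ℕ → E'} {k : ℕ} {f' : (Fin (k+1) → E) →L[ℝ] F} {h' : (Fin (k+1) → E') →L[ℝ] F'}
    (hf : HasFDerivAt (U f k) f' (init σ k)) (hh : HasFDerivAt (U h k) h' (init τ k)) :
    HasFDerivAt (U (par f h) k) ((f'.prodMap h').comp (unzipWord k))
      (init (fun i => (σ i, τ i)) k) := by
  rw [U_par]
  exact (HasFDerivAt.prodMap (init σ k, init τ k) hf hh).comp (init (fun i => (σ i, τ i)) k)
    (unzipWord (E := E) (E' := E') k).hasFDerivAt

end ParallelApproximants

theorem causal_parallel_rule_general {n m p q : ℕ}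
    (f : (ℕ → (Fin n → ℝ)) → ℕ → (Fin m → ℝ))
    (h : (ℕ → (Fin p → ℝ)) → ℕ → (Fin q → ℝ))
    (σ : ℕ → Fin n → ℝ) (τ : ℕ → Fin p → ℝ) (Df Dh : _)
    (hdf : CausalDiffAt f σ) (hdh : CausalDiffAt h τ)
    (hDf : IsCausalDerivAt f σ Df) (hDh : IsCausalDerivAt h τ Dh) :
    CausalDiffAt (par f h) (fun k => (σ k, τ k)) ∧
    IsCausalDerivAt (par f h) (fun k => (σ k, τ k)) (par Df Dh) := by
  have hU k := hasFDerivAt_U_par (hdf k).hasFDerivAt (hdh k).hasFDerivAt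
  refine ⟨fun k => (hU k).differentiableAt, fun Δ k => ?_⟩
  rw [(hU k).fderiv, ContinuousLinearMap.comp_apply, unzipWord_init]
  exact Prod.ext (hDf _ k) (hDh _ k)

/-- Causal parallel rule. -/
theorem causal_parallel_rule {n m p q : ℕ}
    (f : (ℕ → (Fin n → ℝ)) → ℕ → (Fin m → ℝ))
    (h : (ℕ → (Fin p → ℝ)) → ℕ → (Fin q → ℝ))
    (hf : Causal f) (hh : Causal h)
    (σ : ℕ → Fin n → ℝ) (τ : ℕ → Fin p → ℝ) (Df Dh : _)
    (hdf : CausalDiffAt f σ) (hdh : CausalDiffAt h τ)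
    (hDf : IsCausalDerivAt f σ Df) (hDh : IsCausalDerivAt h τ Dh) :
    CausalDiffAt (par f h) (fun k => (σ k, τ k)) ∧
    IsCausalDerivAt (par f h) (fun k => (σ k, τ k)) (par Df Dh) :=
  causal_parallel_rule_general f h σ τ Df Dh hdf hdh hDf hDh
end

section
/- Causal product rules: if f, g : ℝ^ω → ℝ^ω are causal and causally differentiable at σ, then f × g and f ⊙ g (Cauchy and Hadamard products of the outputs) are causally differentiable at σ with D(f×g)(σ)(Δσ) = D f(σ)(Δσ) × g(σ) + f(σ) × D g(σ)(Δσ), and D(f⊙g)(σ)(Δσ) = D f(σ)(Δσ) ⊙ g(σ) + f(σ) ⊙ D g(σ)(Δσ). -/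
/-- The Hadamard (pointwise) product of two real streams. -/
def had (σ τ : ℕ → ℝ) : ℕ → ℝ := fun k => σ k * τ k

/-!
The `k`-th approximant of `f × g` is `w ↦ ∑_{i ≤ k} f(w)_i · g(w)_{k-i}` and that of `f ⊙ g` is
`w ↦ f(w)_k · g(w)_k`. By causality, the `i`-th output coordinate of `f` on a word of length
`k + 1` only sees its prefix of length `i + 1`, i.e. it is `U_i(f)` composed with a linear
truncation map. Each approximant of the products is therefore a finite sum of products of
differentiable functions, and the ordinary product and chain rules give the claimed Jacobians.
-/

section Coordinates

variable {E : Type*} [NormedAddCommGroup E] [NormedSpace ℝ E]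

/-- The prefix of length `i + 1` of a word of length `k + 1`. Indices are clamped at `k`, so
this is only the honest prefix when `i ≤ k`. -/
noncomputable def truncate (i k : ℕ) : (Fin (k+1) → E) →L[ℝ] (Fin (i+1) → E) :=
  ContinuousLinearMap.pi fun j => ContinuousLinearMap.proj (Fin.clamp j k)

theorem truncate_init (σ : ℕ → E) {i k : ℕ} (h : i ≤ k) : truncate i k (init σ k) = init σ i := by
  funext j
  simp [truncate, init, show (j : ℕ) ≤ k by omega]

theorem Causal.apply_extW_eq_U_truncate {B : Type*} {f : (ℕ → E) → ℕ → B} (hf : Causal f) {i k : ℕ}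
    (h : i ≤ k) (w : Fin (k+1) → E) : f (extW w) i = U f i (truncate i k w) := by
  refine hf _ _ i (fun n hn => ?_) i le_rfl
  simp only [extW, truncate, dif_pos (show n < k + 1 by omega), dif_pos (show n < i + 1 by omega)]
  exact congrArg w (Fin.ext (by simp; omega))

theorem Causal.apply_extW_init {A B : Type*} {f : (ℕ → A) → ℕ → B} (hf : Causal f)
    (σ : ℕ → A) {i k : ℕ} (h : i ≤ k) : f (extW (init σ k)) i = f σ i :=
  hf _ _ k (fun n hn => by simp [extW, init, show n < k + 1 by omega]) i h

theorem Causal.hasFDerivAt_apply_extW {F : Type*} [NormedAddCommGroup F] [NormedSpace ℝ F]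
    {f : (ℕ → E) → ℕ → F} (hf : Causal f) {σ : ℕ → E}
    (hdf : CausalDiffAt f σ) {i k : ℕ} (h : i ≤ k) :
    HasFDerivAt (fun w : Fin (k+1) → E => f (extW w) i)
      (fderiv ℝ (U f i) (init σ i) ∘L truncate i k) (init σ k) := by
  simp only [hf.apply_extW_eq_U_truncate h]
  have hU : HasFDerivAt (U f i) (fderiv ℝ (U f i) (init σ i)) (truncate i k (init σ k)) := by
    rw [truncate_init σ h]
    exact (hdf i).hasFDerivAt
  exact hU.comp (init σ k) (truncate (E := E) i k).hasFDerivAt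

end Coordinates

section Products

variable {E : Type*} [NormedAddCommGroup E] [NormedSpace ℝ E] {f g : (ℕ → E) → ℕ → ℝ} {σ : ℕ → E}

theorem Causal.hasFDerivAt_apply_extW_mul (hf : Causal f) (hg : Causal g)
    (hdf : CausalDiffAt f σ) (hdg : CausalDiffAt g σ) {i j k : ℕ} (hi : i ≤ k) (hj : j ≤ k) :
    HasFDerivAt (fun w : Fin (k+1) → E => f (extW w) i * g (extW w) j)
      (f σ i • (fderiv ℝ (U g j) (init σ j) ∘L truncate j k) +
        g σ j • (fderiv ℝ (U f i) (init σ i) ∘L truncate i k)) (init σ k) := by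
  have h := (hf.hasFDerivAt_apply_extW hdf hi).mul (hg.hasFDerivAt_apply_extW hdg hj)
  rwa [hf.apply_extW_init σ hi, hg.apply_extW_init σ hj] at h

theorem hasFDerivAt_U_cauchy (hf : Causal f) (hg : Causal g) (hdf : CausalDiffAt f σ)
    (hdg : CausalDiffAt g σ) (k : ℕ) :
    HasFDerivAt (U (fun ρ => cauchy (f ρ) (g ρ)) k)
      (∑ i ∈ Finset.range (k+1),
        (f σ i • (fderiv ℝ (U g (k-i)) (init σ (k-i)) ∘L truncate (k-i) k) +
          g σ (k-i) • (fderiv ℝ (U f i) (init σ i) ∘L truncate i k))) (init σ k) :=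
  HasFDerivAt.fun_sum fun i hi => hf.hasFDerivAt_apply_extW_mul hg hdf hdg
    (Nat.le_of_lt_succ (Finset.mem_range.1 hi)) (Nat.sub_le k i)

theorem causalDiffAt_cauchy (hf : Causal f) (hg : Causal g) (hdf : CausalDiffAt f σ)
    (hdg : CausalDiffAt g σ) : CausalDiffAt (fun ρ => cauchy (f ρ) (g ρ)) σ := fun k =>
  (hasFDerivAt_U_cauchy hf hg hdf hdg k).differentiableAt

theorem isCausalDerivAt_cauchy {Df Dg : (ℕ → E) → ℕ → ℝ} (hf : Causal f) (hg : Causal g)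
    (hdf : CausalDiffAt f σ) (hdg : CausalDiffAt g σ)
    (hDf : IsCausalDerivAt f σ Df) (hDg : IsCausalDerivAt g σ Dg) :
    IsCausalDerivAt (fun ρ => cauchy (f ρ) (g ρ)) σ
      (fun Δ => cauchy (Df Δ) (g σ) + cauchy (f σ) (Dg Δ)) := by
  intro Δ k
  simp only [(hasFDerivAt_U_cauchy hf hg hdf hdg k).fderiv, Pi.add_apply, cauchy,
    ← Finset.sum_add_distrib, sum_apply]
  refine Finset.sum_congr rfl fun i hi => ?_
  have hik : i ≤ k := Nat.le_of_lt_succ (Finset.mem_range.1 hi)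
  simp only [add_apply, smul_apply, ContinuousLinearMap.comp_apply, smul_eq_mul,
    truncate_init Δ hik, truncate_init Δ (Nat.sub_le k i), ← hDf Δ i, ← hDg Δ (k - i)]
  ring

theorem causalDiffAt_had (hf : Causal f) (hg : Causal g) (hdf : CausalDiffAt f σ)
    (hdg : CausalDiffAt g σ) : CausalDiffAt (fun ρ => had (f ρ) (g ρ)) σ := fun _ =>
  (hf.hasFDerivAt_apply_extW_mul hg hdf hdg le_rfl le_rfl).differentiableAt

theorem isCausalDerivAt_had {Df Dg : (ℕ → E) → ℕ → ℝ} (hf : Causal f) (hg : Causal g)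
    (hdf : CausalDiffAt f σ) (hdg : CausalDiffAt g σ)
    (hDf : IsCausalDerivAt f σ Df) (hDg : IsCausalDerivAt g σ Dg) :
    IsCausalDerivAt (fun ρ => had (f ρ) (g ρ)) σ
      (fun Δ => had (Df Δ) (g σ) + had (f σ) (Dg Δ)) := by
  intro Δ k
  have h : HasFDerivAt (U (fun ρ => had (f ρ) (g ρ)) k) _ (init σ k) :=
    hf.hasFDerivAt_apply_extW_mul hg hdf hdg le_rfl le_rfl
  simp only [h.fderiv, Pi.add_apply, had, add_apply, smul_apply,
    ContinuousLinearMap.comp_apply, smul_eq_mul, truncate_init Δ le_rfl, ← hDf Δ k, ← hDg Δ k]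
  ring

end Products

/-- Causal product rules for the Cauchy and Hadamard products. -/
theorem causal_product_rules (f g : (ℕ → ℝ) → ℕ → ℝ)
    (hf : Causal f) (hg : Causal g) (σ : ℕ → ℝ) (Df Dg : _)
    (hdf : CausalDiffAt f σ) (hdg : CausalDiffAt g σ)
    (hDf : IsCausalDerivAt f σ Df) (hDg : IsCausalDerivAt g σ Dg) :
    (CausalDiffAt (fun ρ => cauchy (f ρ) (g ρ)) σ ∧
      IsCausalDerivAt (fun ρ => cauchy (f ρ) (g ρ)) σ
        (fun Δ => cauchy (Df Δ) (g σ) + cauchy (f σ) (Dg Δ))) ∧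
    (CausalDiffAt (fun ρ => had (f ρ) (g ρ)) σ ∧
      IsCausalDerivAt (fun ρ => had (f ρ) (g ρ)) σ
        (fun Δ => had (Df Δ) (g σ) + had (f σ) (Dg Δ))) :=
  ⟨⟨causalDiffAt_cauchy hf hg hdf hdg, isCausalDerivAt_cauchy hf hg hdf hdg hDf hDg⟩,
    ⟨causalDiffAt_had hf hg hdf hdg, isCausalDerivAt_had hf hg hdf hdg hDf hDg⟩⟩
end

section
/- Causal reciprocal rule: the partial stream inverse (·)^{-1}, characterized by σ × σ^{-1} = [1] for σ_0 ≠ 0, is causally differentiable at every σ with σ_0 ≠ 0, and D(·)^{-1}(σ)(Δσ) = [-1] × σ^{-1} × σ^{-1} × Δσ, where × is the Cauchy product. -/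
/-- The stream inverse for the Cauchy product, defined when `σ 0 ≠ 0`. -/
noncomputable def sinv (σ : ℕ → ℝ) : ℕ → ℝ
  | 0 => 1 / σ 0
  | k+1 => -(1 / σ 0) * ∑ i : Fin (k+1), σ (k + 1 - (i : ℕ)) * sinv σ i


/-!
Write `σ⁻¹` for `sinv σ`. Along a differentiable curve of streams `c` with `(c t)₀ ≠ 0`, every
coefficient of `(c t)⁻¹` is differentiable (it is a rational function of finitely many coefficients
of `c t`), so differentiating the identity `c t × (c t)⁻¹ = [1]` with the Leibniz rule for `×`
gives `c' × σ⁻¹ + σ × D = 0` for the derivative `D` of `(c t)⁻¹`. Multiplying by `σ⁻¹` in the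
ring of power series solves this for `D = [-1] × σ⁻¹ × σ⁻¹ × c'`. Causality of `(·)⁻¹` identifies
the line `t ↦ σ_{0:k} + t Δ_{0:k}` through the `k`-th approximant with the curve `t ↦ σ + t Δ`, so
the Jacobian of `U_k((·)⁻¹)` applied to `Δ_{0:k}` is the `k`-th coefficient of that `D`.
-/

open PowerSeries

lemma mk_cauchy (σ τ : ℕ → ℝ) : mk (cauchy σ τ) = mk σ * mk τ := by
  ext n
  rw [coeff_mk, coeff_mul, Finset.Nat.sum_antidiagonal_eq_sum_range_succ_mk]
  simp [cauchy]

lemma mk_streamConst (r : ℝ) : mk (streamConst r) = C r := by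
  ext n
  simp [streamConst, coeff_C]

lemma cauchy_comm (σ τ : ℕ → ℝ) : cauchy σ τ = cauchy τ σ := by
  funext n
  have h := congrArg (coeff n) (mul_comm (mk σ) (mk τ))
  rwa [← mk_cauchy, ← mk_cauchy, coeff_mk, coeff_mk] at h

lemma cauchy_sinv {σ : ℕ → ℝ} (hσ : σ 0 ≠ 0) : cauchy σ (sinv σ) = streamConst 1 := by
  rw [cauchy_comm]
  funext n
  cases n with
  | zero => simp [cauchy, streamConst, sinv, hσ]
  | succ n =>
    rw [cauchy, Finset.sum_range_succ, Nat.sub_self, sinv, ← Fin.sum_univ_eq_sum_range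
      (fun i => sinv σ i * σ (n + 1 - i))]
    simp only [streamConst, Nat.add_one_ne_zero, if_false, mul_comm (sinv σ _)]
    field_simp
    ring

lemma mk_mul_mk_sinv {σ : ℕ → ℝ} (hσ : σ 0 ≠ 0) : mk σ * mk (sinv σ) = 1 := by
  rw [← mk_cauchy, cauchy_sinv hσ, mk_streamConst, map_one]

lemma causal_sinv : Causal sinv := by
  intro σ τ k hστ n hn
  induction n using Nat.strong_induction_on with
  | _ n ih =>
    cases n with
    | zero => simp [sinv, hστ 0 hn]
    | succ n =>
      rw [sinv, sinv, hστ 0 (Nat.zero_le k)]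
      congr 2 with i
      rw [hστ _ (by omega), ih i (by omega) (by omega)]

lemma Causal.U_init {A B : Type*} {f : (ℕ → A) → ℕ → B} (hf : Causal f) (σ : ℕ → A) (k : ℕ) :
    U f k (init σ k) = f σ k :=
  hf _ σ k (fun i hi => by simp [extW, init, Nat.lt_succ_of_le hi]) k le_rfl

lemma differentiable_extW_apply {E : Type*} [NormedAddCommGroup E] [NormedSpace ℝ E] (k i : ℕ) :
    Differentiable ℝ (fun w : Fin (k + 1) → E => extW w i) := by
  unfold extW
  split_ifs
  exacts [differentiable_apply _, differentiable_apply _]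

lemma differentiableAt_sinv {E : Type*} [NormedAddCommGroup E] [NormedSpace ℝ E]
    {c : ℕ → E → ℝ} {x : E} (hc : ∀ i, DifferentiableAt ℝ (c i) x) (h0 : c 0 x ≠ 0) (n : ℕ) :
    DifferentiableAt ℝ (fun e => sinv (fun i => c i e) n) x := by
  have hinv : DifferentiableAt ℝ (fun e => 1 / c 0 e) x := by
    simpa only [one_div] using (hc 0).fun_inv h0
  induction n using Nat.strong_induction_on with
  | _ n ih =>
    cases n with
    | zero => simpa only [sinv] using hinv
    | succ n =>
      simp only [sinv]
      exact hinv.neg.mul (DifferentiableAt.fun_sum fun i _ => (hc _).mul (ih i i.isLt))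

lemma hasDerivAt_cauchy {a b : ℝ → ℕ → ℝ} {a' b' : ℕ → ℝ} {t : ℝ}
    (ha : ∀ i, HasDerivAt (fun s => a s i) (a' i) t)
    (hb : ∀ i, HasDerivAt (fun s => b s i) (b' i) t) (n : ℕ) :
    HasDerivAt (fun s => cauchy (a s) (b s) n) (cauchy a' (b t) n + cauchy (a t) b' n) t := by
  simp only [cauchy, ← Finset.sum_add_distrib]
  exact HasDerivAt.fun_sum fun i _ => (ha i).mul (hb (n - i))

lemma eq_cauchy_sinv_of_cauchy_add_cauchy_eq_zero {σ Δ D : ℕ → ℝ} (hσ : σ 0 ≠ 0)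
    (h : ∀ n, cauchy Δ (sinv σ) n + cauchy σ D n = 0) :
    D = cauchy (cauchy (cauchy (streamConst (-1)) (sinv σ)) (sinv σ)) Δ := by
  have hps : mk Δ * mk (sinv σ) + mk σ * mk D = 0 := by
    ext n
    simpa [← mk_cauchy] using h n
  have hD : mk D = mk (cauchy (cauchy (cauchy (streamConst (-1)) (sinv σ)) (sinv σ)) Δ) := by
    rw [mk_cauchy, mk_cauchy, mk_cauchy, mk_streamConst, map_neg, map_one]
    linear_combination mk (sinv σ) * hps - mk D * mk_mul_mk_sinv hσ
  funext n
  simpa using congrArg (coeff n) hD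

lemma hasDerivAt_sinv {c : ℝ → ℕ → ℝ} {c' : ℕ → ℝ} {t : ℝ}
    (hc : ∀ i, HasDerivAt (fun s => c s i) (c' i) t) (h0 : c t 0 ≠ 0) (n : ℕ) :
    HasDerivAt (fun s => sinv (c s) n)
      (cauchy (cauchy (cauchy (streamConst (-1)) (sinv (c t))) (sinv (c t))) c' n) t := by
  have hdiff := differentiableAt_sinv (fun i => (hc i).differentiableAt) h0
  set D : ℕ → ℝ := fun n => deriv (fun s => sinv (c s) n) t
  have hprod := hasDerivAt_cauchy hc (fun i => (hdiff i).hasDerivAt)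
  have hconst : ∀ m, HasDerivAt (fun s => cauchy (c s) (sinv (c s)) m) 0 t := by
    intro m
    have hne : ∀ᶠ s in nhds t, c s 0 ≠ 0 := (hc 0).continuousAt.eventually_ne h0
    refine (hasDerivAt_const t (streamConst 1 m)).congr_of_eventuallyEq ?_
    filter_upwards [hne] with s hs
    rw [cauchy_sinv hs]
  have hD := eq_cauchy_sinv_of_cauchy_add_cauchy_eq_zero h0 fun m => (hprod m).unique (hconst m)
  exact hD ▸ (hdiff n).hasDerivAt

/-- Causal reciprocal rule:
`D(·)⁻¹(σ)(Δσ) = [-1] × σ⁻¹ × σ⁻¹ × Δσ`. -/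
theorem causal_reciprocal_rule (σ : ℕ → ℝ) (hσ : σ 0 ≠ 0) :
    CausalDiffAt sinv σ ∧
    IsCausalDerivAt sinv σ (fun Δ =>
      cauchy (cauchy (cauchy (streamConst (-1)) (sinv σ)) (sinv σ)) Δ) := by
  have hdiff : CausalDiffAt sinv σ := fun k =>
    differentiableAt_sinv (fun i => (differentiable_extW_apply k i).differentiableAt)
      (by simpa [extW, init] using hσ) k
  refine ⟨hdiff, fun Δ k => ?_⟩
  have hline : HasLineDerivAt ℝ (U sinv k)
      (cauchy (cauchy (cauchy (streamConst (-1)) (sinv σ)) (sinv σ)) Δ k) (init σ k) (init Δ k) := by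
    have hcurve := hasDerivAt_sinv (c := fun t => σ + t • Δ) (c' := Δ) (t := 0)
      (fun i => by simpa using ((hasDerivAt_id (0 : ℝ)).mul_const (Δ i)).const_add (σ i))
      (by simpa using hσ) k
    simp only [zero_smul, add_zero] at hcurve
    exact hcurve.congr_of_eventuallyEq (.of_forall fun t => causal_sinv.U_init (σ + t • Δ) k)
  exact hline.unique ((hdiff k).hasFDerivAt.hasLineDerivAt _)
end

section
/- Causal map rule: if h : ℝ^n → ℝ^m is differentiable, then map(h) : (ℝ^n)^ω → (ℝ^m)^ω, (map(h)(σ))_k = h(σ_k), is causally differentiable everywhere, and D(map(h))(σ)(Δσ)_k = Jh(σ_k)(Δσ_k). -/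
/-- Componentwise application of a function to a stream. -/
def mapC {E F : Type*} (h : E → F) (σ : ℕ → E) : ℕ → F := fun k => h (σ k)


lemma U_mapC_eq {E F : Type*} (h : E → F) (k : ℕ) :
    U (mapC h) k = fun w : Fin (k+1) → E => h (w (Fin.last k)) := by
  funext w
  simp [U, mapC, extW, Nat.lt_succ_self, Fin.last]

/-- Causal map rule. -/
theorem causal_map_rule {n m : ℕ} (h : (Fin n → ℝ) → Fin m → ℝ)
    (hh : Differentiable ℝ h) (σ : ℕ → Fin n → ℝ) :
    CausalDiffAt (mapC h) σ ∧
    IsCausalDerivAt (mapC h) σ (fun Δ k => fderiv ℝ h (σ k) (Δ k)) := by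
  have key : ∀ k, U (mapC h) k =
      h ∘ (ContinuousLinearMap.proj (R := ℝ) (φ := fun _ : Fin (k+1) => Fin n → ℝ) (Fin.last k)) := by
    intro k
    rw [U_mapC_eq]
    rfl
  have hdiff : ∀ (k : ℕ) (x : Fin (k+1) → Fin n → ℝ),
      DifferentiableAt ℝ (U (mapC h) k) x := by
    intro k x
    rw [key k]
    exact (hh _).comp x (ContinuousLinearMap.proj (R := ℝ) (φ := fun _ : Fin (k+1) => Fin n → ℝ) (Fin.last k)).differentiableAt
  refine ⟨fun k => hdiff k _, fun Δ k => ?_⟩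
  have := fderiv_comp (𝕜 := ℝ) (init σ k)
    (hh (init σ k (Fin.last k)))
    (ContinuousLinearMap.proj (R := ℝ) (φ := fun _ : Fin (k+1) => Fin n → ℝ)
      (Fin.last k)).differentiableAt
  rw [key k, this]
  simp [init, Fin.last]
end
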